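/- If evaluating expression e to an integer succeeds with side conditions (i.e., the CPS symbolic evaluation evalZCps e C σ holds), then the partial evaluation function yields a value: there exists z with evalZ e σ = some z, MIN ≤ z ≤ MAX provided σ is well-bounded, and C z σ holds. -/

import Mathlib

set_option autoImplicit true

def MIN : Int := -2147483648
def MAX : Int := 2147483647

abbrev Store := String → Option Int

def Store.update (x : String) (v : Option Int) (σ : Store) : Store :=
  fun y => if x = y then v else σ y

def emptyStore : Store := fun _ => none

def WellBounded (σ : Store) : Prop := ∀ x z, σ x = some z → MIN ≤ z ∧ z ≤ MAX

def inBounds (z : Int) : Prop := MIN ≤ z ∧ z ≤ MAX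

instance : DecidablePred inBounds := fun z => by unfold inBounds; infer_instance

inductive Expr where
  | tt | ff
  | lit (z : Int)
  | var (x : String)
  | add (e₁ e₂ : Expr)
  | sub (e₁ e₂ : Expr)
  | div (e₁ e₂ : Expr)
  | lt (e₁ e₂ : Expr)
  | le (e₁ e₂ : Expr)
  | eq (e₁ e₂ : Expr)
  | ne (e₁ e₂ : Expr)

def evalZ : Expr → Store → Option Int
  | .lit z, _ => if inBounds z then some z else none
  | .var x, σ => σ x
  | .add e₁ e₂, σ =>
      match evalZ e₁ σ, evalZ e₂ σ with
      | some z₁, some z₂ => if inBounds (z₁ + z₂) then some (z₁ + z₂) else none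
      | _, _ => none
  | .sub e₁ e₂, σ =>
      match evalZ e₁ σ, evalZ e₂ σ with
      | some z₁, some z₂ => if inBounds (z₁ - z₂) then some (z₁ - z₂) else none
      | _, _ => none
  | .div e₁ e₂, σ =>
      match evalZ e₁ σ, evalZ e₂ σ with
      | some z₁, some z₂ =>
          if z₂ ≠ 0 ∧ ¬(z₁ = MIN ∧ z₂ = -1) then some (Int.tdiv z₁ z₂) else none
      | _, _ => none
  | _, _ => none

def evalBool : Expr → Store → Option Bool
  | .tt, _ => some true
  | .ff, _ => some false
  | .lt e₁ e₂, σ =>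
      match evalZ e₁ σ, evalZ e₂ σ with
      | some z₁, some z₂ => some (decide (z₁ < z₂))
      | _, _ => none
  | .le e₁ e₂, σ =>
      match evalZ e₁ σ, evalZ e₂ σ with
      | some z₁, some z₂ => some (decide (z₁ ≤ z₂))
      | _, _ => none
  | .eq e₁ e₂, σ =>
      match evalZ e₁ σ, evalZ e₂ σ with
      | some z₁, some z₂ => some (decide (z₁ = z₂))
      | _, _ => none
  | .ne e₁ e₂, σ =>
      match evalZ e₁ σ, evalZ e₂ σ with
      | some z₁, some z₂ => some (decide (z₁ ≠ z₂))
      | _, _ => none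
  | _, _ => none

abbrev SCont := Store → Prop

def evalZCps : Expr → (Int → SCont) → SCont
  | .lit z, C, σ => if inBounds z then C z σ else False
  | .var x, C, σ =>
      match σ x with
      | some z => C z σ
      | none => False
  | .add e₁ e₂, C, σ =>
      evalZCps e₁ (fun z₁ σ => evalZCps e₂ (fun z₂ σ =>
        MIN ≤ z₁ + z₂ ∧ ((z₁ + z₂ ≤ MAX) ∧ C (z₁ + z₂) σ)) σ) σ
  | .sub e₁ e₂, C, σ =>
      evalZCps e₁ (fun z₁ σ => evalZCps e₂ (fun z₂ σ =>
        MIN ≤ z₁ - z₂ ∧ ((z₁ - z₂ ≤ MAX) ∧ C (z₁ - z₂) σ)) σ) σ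
  | .div e₁ e₂, C, σ =>
      evalZCps e₁ (fun z₁ σ => evalZCps e₂ (fun z₂ σ =>
        z₂ ≠ 0 ∧ ((¬(z₁ = MIN ∧ z₂ = -1)) ∧ C (Int.tdiv z₁ z₂) σ)) σ) σ
  | _, _, _ => False

theorem Int.natAbs_tdiv_le_half (a : Int) {b : Int} (hb : 2 ≤ b.natAbs) :
    (a.tdiv b).natAbs ≤ a.natAbs / 2 := by
  rw [Int.natAbs_tdiv]
  exact Nat.div_le_div_left hb two_pos

-- `MIN.tdiv (-1) = MAX + 1` is the only way truncated division can leave the bounds.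
theorem inBounds_tdiv {z₁ z₂ : Int} (h₁ : inBounds z₁) (hz : z₂ ≠ 0)
    (hov : ¬(z₁ = MIN ∧ z₂ = -1)) : inBounds (z₁.tdiv z₂) := by
  unfold inBounds MIN MAX at *
  obtain rfl | rfl | hb : z₂ = 1 ∨ z₂ = -1 ∨ 2 ≤ z₂.natAbs := by omega
  · rw [Int.tdiv_one]; omega
  · rw [Int.tdiv_neg, Int.tdiv_one]; omega
  · have := Int.natAbs_tdiv_le_half z₁ hb
    omega

theorem evalZCps_evalZ {e : Expr} {C : Int → SCont} {σ : Store}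
    (hwb : WellBounded σ) (h : evalZCps e C σ) :
    ∃ z, evalZ e σ = some z ∧ (MIN ≤ z ∧ z ≤ MAX) ∧ C z σ := by
  induction e generalizing C with
  | lit z =>
    by_cases hz : inBounds z
    · simp only [evalZCps, hz, if_true] at h
      exact ⟨z, by simp [evalZ, hz], hz, h⟩
    · simp [evalZCps, hz] at h
  | var x =>
    cases hx : σ x with
    | none => simp [evalZCps, hx] at h
    | some z =>
      simp only [evalZCps, hx] at h
      exact ⟨z, hx, hwb x z hx, h⟩
  | add e₁ e₂ ih₁ ih₂ =>
    obtain ⟨z₁, hz₁, -, h₁⟩ := ih₁ h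
    obtain ⟨z₂, hz₂, -, hmin, hmax, hC⟩ := ih₂ h₁
    exact ⟨z₁ + z₂, by simp [evalZ, hz₁, hz₂, inBounds, hmin, hmax], ⟨hmin, hmax⟩, hC⟩
  | sub e₁ e₂ ih₁ ih₂ =>
    obtain ⟨z₁, hz₁, -, h₁⟩ := ih₁ h
    obtain ⟨z₂, hz₂, -, hmin, hmax, hC⟩ := ih₂ h₁
    exact ⟨z₁ - z₂, by simp [evalZ, hz₁, hz₂, inBounds, hmin, hmax], ⟨hmin, hmax⟩, hC⟩
  | div e₁ e₂ ih₁ ih₂ =>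
    obtain ⟨z₁, hz₁, hb₁, h₁⟩ := ih₁ h
    obtain ⟨z₂, hz₂, -, hne, hov, hC⟩ := ih₂ h₁
    exact ⟨z₁.tdiv z₂, by simp [evalZ, hz₁, hz₂, hne, hov], inBounds_tdiv hb₁ hne hov, hC⟩
  | _ => exact h.elim
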